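/- Suppose T and U are necklaces, u : U → S and t : T → S are maps of simplicial sets with t totally nondegenerate. Then there is at most one surjective map of necklaces f : U → T (preserving initial and final vertices) with u = t ∘ f. -/

import Mathlib

open CategoryTheory Simplicial

namespace Paper

/-- The directed-edge relation on vertices of a simplicial set. -/
def edgeRel (X : SSet) (x y : X _⦋0⦌) : Prop :=
  ∃ e : X _⦋1⦌, X.δ 1 e = x ∧ X.δ 0 e = y

/-- `x ⪯ y` iff there is a finite directed path of 1-simplices from `x` to `y`. -/
def vertPath (X : SSet) : X _⦋0⦌ → X _⦋0⦌ → Prop :=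
  Relation.ReflTransGen (edgeRel X)

/-- The sequence of vertices of an `n`-simplex. -/
def vertexSeq {X : SSet} {n : ℕ} (x : X _⦋n⦌) : Fin (n + 1) → X _⦋0⦌ :=
  fun i => X.map (SimplexCategory.const (⦋0⦌ : SimplexCategory) ⦋n⦌ i).op x

/-- A simplicial set is *ordered* if the path preorder on its vertices is
antisymmetric and every simplex is determined by its sequence of vertices. -/
def Ordered (X : SSet) : Prop :=
  (∀ x y : X _⦋0⦌, vertPath X x y → vertPath X y x → x = y) ∧
  (∀ (n : ℕ) (x y : X _⦋n⦌), vertexSeq x = vertexSeq y → x = y)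

/-- A hands-on model of the standard `n`-simplex. -/
def Δstd (n : ℕ) : SSet where
  obj m := Fin (m.unop.len + 1) →o Fin (n + 1)
  map φ := TypeCat.ofHom fun f => f.comp φ.unop.toOrderHom
  map_id _ := rfl
  map_comp _ _ := rfl

/-- The condition cutting a necklace with joint set `J` out of `Δstd N`:
no joint lies strictly between the first and last vertex of the simplex. -/
def NeckCond {N : ℕ} (J : Finset (Fin (N + 1))) {m : SimplexCategoryᵒᵖ}
    (f : Fin (m.unop.len + 1) →o Fin (N + 1)) : Prop :=
  ∀ t ∈ J, ¬ (f 0 < t ∧ t < f (Fin.last m.unop.len))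

/-- The necklace with vertices `0,…,N` and joints `J` (a wedge of simplices glued
end to end; the beads span the intervals between consecutive joints). -/
def Necklace (N : ℕ) (J : Finset (Fin (N + 1))) : SSet where
  obj m := { f : Fin (m.unop.len + 1) →o Fin (N + 1) // NeckCond J f }
  map φ := TypeCat.ofHom fun f => ⟨f.1.comp φ.unop.toOrderHom, by
    intro t ht h
    exact f.2 t ht ⟨lt_of_le_of_lt (f.1.monotone (Fin.zero_le _)) h.1,
      lt_of_lt_of_le h.2 (f.1.monotone (Fin.le_last _))⟩⟩
  map_id _ := rfl
  map_comp _ _ := rfl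

/-- The vertex `v` of a necklace. -/
def vtx {N : ℕ} (J : Finset (Fin (N + 1))) (v : Fin (N + 1)) : (Necklace N J) _⦋0⦌ :=
  ⟨⟨fun _ => v, fun _ _ _ => le_rfl⟩, fun _ _ h => absurd (h.1.trans h.2) (lt_irrefl v)⟩

/-- The canonical inclusion of a necklace into the simplex on its vertices. -/
def neckIncl (N : ℕ) (J : Finset (Fin (N + 1))) : Necklace N J ⟶ Δstd N where
  app _ := TypeCat.ofHom fun f => f.1
  naturality _ _ _ := rfl

lemma eq_vtx {N : ℕ} {J : Finset (Fin (N + 1))} (x : (Necklace N J) _⦋0⦌) :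
    x = vtx J (x.1 0) := by
  refine Subtype.ext (OrderHom.ext _ _ (funext fun i => ?_))
  have : i = 0 := Subsingleton.elim (α := Fin 1) i 0
  rw [this]; rfl

/-- The map induced on vertices by a map of necklaces. -/
def nvmap {N N' : ℕ} {J : Finset (Fin (N + 1))} {J' : Finset (Fin (N' + 1))}
    (g : Necklace N J ⟶ Necklace N' J') : Fin (N + 1) → Fin (N' + 1) :=
  fun v => (g.app (Opposite.op (⦋0⦌ : SimplexCategory)) (vtx J v)).1 0

lemma app_vtx {N N' : ℕ} {J : Finset (Fin (N + 1))} {J' : Finset (Fin (N' + 1))}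
    (g : Necklace N J ⟶ Necklace N' J') (v : Fin (N + 1)) :
    g.app (Opposite.op (⦋0⦌ : SimplexCategory)) (vtx J v) = vtx J' (nvmap g v) :=
  eq_vtx _

lemma nvmap_comp {N N' N'' : ℕ} {J : Finset (Fin (N + 1))} {J' : Finset (Fin (N' + 1))}
    {J'' : Finset (Fin (N'' + 1))} (g : Necklace N J ⟶ Necklace N' J')
    (h : Necklace N' J' ⟶ Necklace N'' J'') :
    nvmap (g ≫ h) = nvmap h ∘ nvmap g := by
  funext v
  show (h.app _ (g.app _ (vtx J v))).1 0 = _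
  rw [app_vtx g v]
  rfl

/-- A map of simplicial sets is a *simple inclusion* if it has the right lifting
property with respect to the endpoint inclusions `∂Δ¹ ↪ T` for every necklace `T`. -/
def IsSimpleInclusion {A X : SSet} (i : A ⟶ X) : Prop :=
  ∀ (N : ℕ) (J : Finset (Fin (N + 1))), (0 : Fin (N + 1)) ∈ J → Fin.last N ∈ J →
    ∀ (v : Necklace N J ⟶ X) (a b : A _⦋0⦌),
      i.app _ a = v.app _ (vtx J 0) → i.app _ b = v.app _ (vtx J (Fin.last N)) →
      ∃ l : Necklace N J ⟶ A, l ≫ i = v ∧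
        l.app _ (vtx J 0) = a ∧ l.app _ (vtx J (Fin.last N)) = b

def Pstd (m : ℕ) (n : Fin m → ℕ) : SSet where
  obj k := ∀ i : Fin m, Fin (k.unop.len + 1) →o Fin (n i + 1)
  map φ := TypeCat.ofHom fun f => fun i => (f i).comp φ.unop.toOrderHom
  map_id _ := rfl
  map_comp _ _ := rfl

/-- A simplex of a simplicial set is nondegenerate if it is not the image of a
lower-dimensional simplex under a degeneracy operator. -/
def IsNondeg {X : SSet} {n : ℕ} (x : X _⦋n⦌) : Prop :=
  ∀ (m : ℕ) (σ : (⦋n⦌ : SimplexCategory) ⟶ ⦋m⦌) (y : X _⦋m⦌),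
    Function.Surjective σ.toOrderHom → x = X.map σ.op y → n ≤ m

/-- A simplex is degenerate if it is the image of a  strictly lower-dimensional
simplex under a (surjective) degeneracy operator. -/
def IsDegenerate {X : SSet} {n : ℕ} (x : X _⦋n⦌) : Prop :=
  ∃ (m : ℕ) (σ : (⦋n⦌ : SimplexCategory) ⟶ ⦋m⦌) (y : X _⦋m⦌),
    m < n ∧ Function.Surjective σ.toOrderHom ∧ x = X.map σ.op y


/-- The bead of a necklace spanning two consecutive joints `j ≤ j'`. -/
def bead {N : ℕ} (J : Finset (Fin (N + 1))) (j j' : Fin (N + 1)) (hle : j ≤ j')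
    (hcons : ∀ t ∈ J, ¬ (j < t ∧ t < j')) :
    (Necklace N J) _⦋j'.val - j.val⦌ :=
  ⟨⟨fun k => ⟨j.val + k.val, by
        have hk := k.isLt
        simp only [Opposite.unop_op, SimplexCategory.len_mk] at hk
        have := j'.isLt; omega⟩,
      fun k k' h => by
        simp only [Fin.mk_le_mk]
        exact Nat.add_le_add_left h j.val⟩,
    by
      intro t ht h
      refine hcons t ht ⟨?_, ?_⟩
      · have h1 := h.1
        change j.val + 0 < t.val at h1
        rw [Fin.lt_def]
        omega
      · have h2 := h.2
        have hle' : j.val ≤ j'.val := hle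
        change t.val < j.val + (j'.val - j.val) at h2
        rw [Fin.lt_def]
        omega⟩

/-- A map from a necklace is totally nondegenerate if it sends each bead to a
nondegenerate simplex. -/
def TotallyNondeg {N : ℕ} {J : Finset (Fin (N + 1))} {S : SSet}
    (f : Necklace N J ⟶ S) : Prop :=
  ∀ (j j' : Fin (N + 1)), j ∈ J → j' ∈ J → ∀ (hlt : j < j')
    (hcons : ∀ t ∈ J, ¬ (j < t ∧ t < j')),
    IsNondeg (f.app _ (bead J j j' hlt.le hcons))

/-- A levelwise surjection of simplicial sets. -/
def LevelSurj {X Y : SSet} (f : X ⟶ Y) : Prop :=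
  ∀ m, Function.Surjective (f.app m)

/-- The category of necklaces over `S` with endpoints `a` and `b`. -/
structure NecOver (S : SSet) (a b : S _⦋0⦌) where
  N : ℕ
  J : Finset (Fin (N + 1))
  h0 : (0 : Fin (N + 1)) ∈ J
  hN : Fin.last N ∈ J
  f : Necklace N J ⟶ S
  ha : f.app _ (vtx J 0) = a
  hb : f.app _ (vtx J (Fin.last N)) = b

instance (S : SSet) (a b : S _⦋0⦌) : Category (NecOver S a b) where
  Hom t u := { g : Necklace t.N t.J ⟶ Necklace u.N u.J //
    g ≫ u.f = t.f ∧ g.app _ (vtx t.J 0) = vtx u.J 0 ∧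
    g.app _ (vtx t.J (Fin.last t.N)) = vtx u.J (Fin.last u.N) }
  id t := ⟨𝟙 _, Category.id_comp _, rfl, rfl⟩
  comp {t u v} g h := ⟨g.1 ≫ h.1, by rw [Category.assoc, h.2.1, g.2.1],
    by show h.1.app _ (g.1.app _ _) = _; rw [g.2.2.1, h.2.2.1],
    by show h.1.app _ (g.1.app _ _) = _; rw [g.2.2.2, h.2.2.2]⟩
  id_comp g := Subtype.ext (Category.id_comp _)
  comp_id g := Subtype.ext (Category.comp_id _)
  assoc f g h := Subtype.ext (Category.assoc _ _ _)


/-- Flagged necklaces over `S` with endpoints `a, b` and flags of length `n`. -/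
structure FlaggedNec (S : SSet) (a b : S _⦋0⦌) (n : ℕ) where
  N : ℕ
  J : Finset (Fin (N + 1))
  h0 : (0 : Fin (N + 1)) ∈ J
  hN : Fin.last N ∈ J
  f : Necklace N J ⟶ S
  ha : f.app _ (vtx J 0) = a
  hb : f.app _ (vtx J (Fin.last N)) = b
  flag : Fin (n + 1) → Finset (Fin (N + 1))
  flag_mono : Monotone flag
  flag_joints : J ⊆ flag 0

instance (S : SSet) (a b : S _⦋0⦌) (n : ℕ) : Category (FlaggedNec S a b n) where
  Hom t u := { g : Necklace t.N t.J ⟶ Necklace u.N u.J //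
    g ≫ u.f = t.f ∧ g.app _ (vtx t.J 0) = vtx u.J 0 ∧
    g.app _ (vtx t.J (Fin.last t.N)) = vtx u.J (Fin.last u.N) ∧
    ∀ i, (t.flag i).image (nvmap g) = u.flag i }
  id t := ⟨𝟙 _, Category.id_comp _, rfl, rfl, fun i => by
    have : nvmap (𝟙 (Necklace t.N t.J)) = id := rfl
    rw [this, Finset.image_id]⟩
  comp {t u v} g h := ⟨g.1 ≫ h.1, by rw [Category.assoc, h.2.1, g.2.1],
    by show h.1.app _ (g.1.app _ _) = _; rw [g.2.2.1, h.2.2.1],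
    by show h.1.app _ (g.1.app _ _) = _; rw [g.2.2.2.1, h.2.2.2.1],
    fun i => by
      rw [nvmap_comp, ← Finset.image_image, g.2.2.2.2 i, h.2.2.2.2 i]⟩
  id_comp g := Subtype.ext (Category.id_comp _)
  comp_id g := Subtype.ext (Category.comp_id _)
  assoc f g h := Subtype.ext (Category.assoc _ _ _)


/-!
A map of necklaces is determined by its monotone vertex map `φ`, which is surjective when the
map is, and then sends joints to joints. On a bead `x = [a, a']` of `U`, the simplex `f x` is
the degeneracy `k ↦ φ (a + k) - φ a` (an epimorphism) of the bead or vertex `[φ a, φ a']` of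
`T`, whose image under `t` is nondegenerate. So `u x = t (f x)` comes with its
Eilenberg–Zilber decomposition, and uniqueness of that decomposition shows that two such maps
agreeing at `a` agree on all of `[a, a']`. Induction along the beads from `φ 0 = 0` finishes.
-/

lemma IsNondeg.mem_nonDegenerate {X : SSet} {n : ℕ} {x : X _⦋n⦌} (hx : IsNondeg x) :
    x ∈ X.nonDegenerate n := by
  intro hdeg
  obtain ⟨m, hm, σ, hσ, y, rfl⟩ := (X.mem_degenerate_iff x).1 hdeg
  exact absurd (hx m σ y (SimplexCategory.epi_iff_surjective.1 hσ) rfl) (by omega)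

/-- Uniqueness of the Eilenberg–Zilber decomposition, without assuming the two
nondegenerate simplices to have the same dimension. -/
lemma apply_val_eq_of_map_eq {X : SSet} {n m₁ m₂ : ℕ} (σ₁ : ⦋n⦌ ⟶ ⦋m₁⦌) (σ₂ : ⦋n⦌ ⟶ ⦋m₂⦌)
    [Epi σ₁] [Epi σ₂] {z₁ : X _⦋m₁⦌} {z₂ : X _⦋m₂⦌} (hz₁ : z₁ ∈ X.nonDegenerate m₁)
    (hz₂ : z₂ ∈ X.nonDegenerate m₂) (h : X.map σ₁.op z₁ = X.map σ₂.op z₂) (k : Fin (n + 1)) :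
    (σ₁.toOrderHom k).val = (σ₂.toOrderHom k).val := by
  obtain rfl := X.unique_nonDegenerate_dim _ σ₁ ⟨z₁, hz₁⟩ rfl σ₂ ⟨z₂, hz₂⟩ h
  rw [X.unique_nonDegenerate_map _ σ₁ ⟨z₁, hz₁⟩ rfl σ₂ ⟨z₂, hz₂⟩ h]

section NecklaceMaps

variable {N N' : ℕ} {J : Finset (Fin (N + 1))} {J' : Finset (Fin (N' + 1))}

lemma exists_consecutive_joints (h0 : (0 : Fin (N + 1)) ∈ J) (hN : Fin.last N ∈ J)
    {v : Fin (N + 1)} (hv : 0 < v) :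
    ∃ a ∈ J, ∃ a' ∈ J, a < v ∧ v ≤ a' ∧ ∀ s ∈ J, ¬ (a < s ∧ s < a') := by
  classical
  obtain ⟨a, ha, hmax⟩ := (J.filter (· < v)).exists_max_image id ⟨0, by simp [h0, hv]⟩
  obtain ⟨a', ha', hmin⟩ :=
    (J.filter (v ≤ ·)).exists_min_image id ⟨Fin.last N, by simp [hN, Fin.le_last]⟩
  rw [Finset.mem_filter] at ha ha'
  refine ⟨a, ha.1, a', ha'.1, ha.2, ha'.2, fun s hs ⟨has, hsa'⟩ => ?_⟩
  rcases lt_or_ge s v with h | h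
  · exact (hmax s (by simp [hs, h])).not_gt has
  · exact (hmin s (by simp [hs, h])).not_gt hsa'

lemma bead_apply_val {j j' : Fin (N + 1)} (hle : j ≤ j') (hcons : ∀ t ∈ J, ¬ (j < t ∧ t < j'))
    (k : Fin (j'.val - j.val + 1)) : ((bead J j j' hle hcons).1 k).val = j.val + k.val :=
  rfl

lemma bead_apply_zero {j j' : Fin (N + 1)} (hle : j ≤ j')
    (hcons : ∀ t ∈ J, ¬ (j < t ∧ t < j')) : (bead J j j' hle hcons).1 0 = j :=
  Fin.ext (by simp [bead_apply_val])

lemma bead_apply_last {j j' : Fin (N + 1)} (hle : j ≤ j')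
    (hcons : ∀ t ∈ J, ¬ (j < t ∧ t < j')) :
    (bead J j j' hle hcons).1 (Fin.last (j'.val - j.val)) = j' :=
  Fin.ext (by simp only [bead_apply_val, Fin.val_last]; have : j.val ≤ j'.val := hle; omega)

lemma exists_bead_apply_eq {j j' v : Fin (N + 1)} (hle : j ≤ j')
    (hcons : ∀ t ∈ J, ¬ (j < t ∧ t < j')) (hjv : j ≤ v) (hvj : v ≤ j') :
    ∃ k, (bead J j j' hle hcons).1 k = v := by
  have : j.val ≤ v.val := hjv
  have : v.val ≤ j'.val := hvj
  exact ⟨⟨v.val - j.val, show _ < j'.val - j.val + 1 by omega⟩,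
    Fin.ext (by simp only [bead_apply_val]; omega)⟩

lemma app_apply (f : Necklace N J ⟶ Necklace N' J') {m : SimplexCategoryᵒᵖ}
    (x : (Necklace N J).obj m) (k : Fin (m.unop.len + 1)) :
    (f.app m x).1 k = nvmap f (x.1 k) := by
  have h := NatTrans.naturality_apply f (SimplexCategory.const ⦋0⦌ m.unop k).op x
  exact congrArg (fun y => y.1 0) (h.symm.trans (app_vtx f (x.1 k)))

lemma hom_ext_of_nvmap_eq {f g : Necklace N J ⟶ Necklace N' J'} (h : nvmap f = nvmap g) :
    f = g := by
  ext m : 2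
  ext x
  exact Subtype.ext (OrderHom.ext _ _ (funext fun k =>
    (app_apply f x k).trans ((congrFun h _).trans (app_apply g x k).symm)))

lemma monotone_nvmap (f : Necklace N J ⟶ Necklace N' J') : Monotone (nvmap f) := by
  refine Fin.monotone_iff_le_succ.2 fun i => ?_
  have hcons : ∀ s ∈ J, ¬ (i.castSucc < s ∧ s < i.succ) :=
    fun s _ h => (Fin.castSucc_lt_iff_succ_le.1 h.1).not_gt h.2
  have := (f.app _ (bead J _ _ i.castSucc_lt_succ.le hcons)).1.monotone
    (Fin.zero_le (Fin.last _))
  rwa [app_apply, app_apply, bead_apply_zero, bead_apply_last] at this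

lemma surjective_nvmap {f : Necklace N J ⟶ Necklace N' J'} (hf : LevelSurj f) :
    Function.Surjective (nvmap f) := fun w => by
  obtain ⟨x, hx⟩ := hf _ (vtx J' w)
  exact ⟨x.1 0, by rw [← app_apply, hx]; rfl⟩

lemma nvmap_zero {f : Necklace N J ⟶ Necklace N' J'} (hf : LevelSurj f) : nvmap f 0 = 0 := by
  obtain ⟨v, hv⟩ := surjective_nvmap hf 0
  exact le_antisymm (hv ▸ monotone_nvmap f (Fin.zero_le v)) (Fin.zero_le _)

/-- A joint sent into the interior of a bead of `J'` would lie in the interior of every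
preimage of that bead. -/
lemma nvmap_mem {f : Necklace N J ⟶ Necklace N' J'} (hf : LevelSurj f)
    (h0' : (0 : Fin (N' + 1)) ∈ J') (hN' : Fin.last N' ∈ J') {a : Fin (N + 1)} (ha : a ∈ J) :
    nvmap f a ∈ J' := by
  by_contra hfa
  have hpos : 0 < nvmap f a := Fin.pos_iff_ne_zero.2 fun h => hfa (h ▸ h0')
  obtain ⟨b, -, b', hb', hbw, hwb', hcons⟩ := exists_consecutive_joints h0' hN' hpos
  replace hwb' : nvmap f a < b' := lt_of_le_of_ne hwb' fun h => hfa (h ▸ hb')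
  obtain ⟨x, hx⟩ := hf _ (bead J' b b' (hbw.trans hwb').le hcons)
  have hx0 : nvmap f (x.1 0) = b := by rw [← app_apply, hx, bead_apply_zero]
  have hxl : nvmap f (x.1 (Fin.last _)) = b' := by rw [← app_apply, hx, bead_apply_last]
  exact x.2 a ha ⟨(monotone_nvmap f).reflect_lt (by rwa [hx0]),
    (monotone_nvmap f).reflect_lt (by rwa [hxl])⟩

def spanMap {n : ℕ} (y : (Necklace N J) _⦋n⦌) :
    ⦋n⦌ ⟶ ⦋(y.1 (Fin.last n)).val - (y.1 0).val⦌ :=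
  SimplexCategory.mkHom
    { toFun := fun k => ⟨(y.1 k).val - (y.1 0).val, by
        have : (y.1 k).val ≤ (y.1 (Fin.last n)).val := y.1.monotone (Fin.le_last k)
        omega⟩
      monotone' := fun _ _ h => Nat.sub_le_sub_right (y.1.monotone h) _ }

lemma spanMap_apply_val {n : ℕ} (y : (Necklace N J) _⦋n⦌) (k : Fin (n + 1)) :
    ((spanMap y).toOrderHom k).val = (y.1 k).val - (y.1 0).val :=
  rfl

def spanBead {n : ℕ} (y : (Necklace N J) _⦋n⦌) :
    (Necklace N J) _⦋(y.1 (Fin.last n)).val - (y.1 0).val⦌ :=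
  bead J _ _ (y.1.monotone (Fin.zero_le _)) y.2

lemma map_spanMap_spanBead {n : ℕ} (y : (Necklace N J) _⦋n⦌) :
    (Necklace N J).map (spanMap y).op (spanBead y) = y := by
  refine Subtype.ext (OrderHom.ext _ _ (funext fun k => Fin.ext ?_))
  have : (y.1 0).val ≤ (y.1 k).val := y.1.monotone (Fin.zero_le k)
  show (y.1 0).val + ((y.1 k).val - (y.1 0).val) = (y.1 k).val
  omega

lemma epi_spanMap {n : ℕ} {y : (Necklace N J) _⦋n⦌}
    (hy : Set.SurjOn y.1 Set.univ (Set.Icc (y.1 0) (y.1 (Fin.last n)))) :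
    Epi (spanMap y) := by
  rw [SimplexCategory.epi_iff_surjective]
  intro j
  have hj : j.val < (y.1 (Fin.last n)).val - (y.1 0).val + 1 := j.isLt
  have hy0 : (y.1 0).val ≤ (y.1 (Fin.last n)).val := y.1.monotone (Fin.zero_le _)
  obtain ⟨k, -, hk⟩ := hy (show (⟨(y.1 0).val + j.val, by omega⟩ : Fin (N + 1)) ∈ Set.Icc _ _
    from ⟨Fin.le_def.2 (Nat.le_add_right _ _), Fin.le_def.2
      (show (y.1 0).val + j.val ≤ (y.1 (Fin.last n)).val by omega)⟩)
  exact ⟨k, Fin.ext (by rw [spanMap_apply_val, hk]; simp)⟩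

lemma epi_spanMap_app_bead {f : Necklace N J ⟶ Necklace N' J'} (hf : LevelSurj f)
    {a a' : Fin (N + 1)} (hle : a ≤ a') (hcons : ∀ s ∈ J, ¬ (a < s ∧ s < a')) :
    Epi (spanMap (f.app _ (bead J a a' hle hcons))) := by
  refine epi_spanMap fun w hw => ?_
  rw [Set.mem_Icc, app_apply, app_apply, bead_apply_zero, bead_apply_last] at hw
  obtain ⟨v, ⟨hav, hva'⟩, rfl⟩ :=
    surjOn_Icc_of_monotone_surjective (monotone_nvmap f) (surjective_nvmap hf) hle hw
  obtain ⟨k, hk⟩ := exists_bead_apply_eq hle hcons hav hva'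
  exact ⟨k, trivial, by rw [app_apply, hk]⟩

lemma TotallyNondeg.app_bead_mem_nonDegenerate {S : SSet} {t : Necklace N' J' ⟶ S}
    (ht : TotallyNondeg t)
    {j j' : Fin (N' + 1)} (hj : j ∈ J') (hj' : j' ∈ J') (hle : j ≤ j')
    (hcons : ∀ s ∈ J', ¬ (j < s ∧ s < j')) :
    t.app _ (bead J' j j' hle hcons) ∈ S.nonDegenerate _ := by
  rcases hle.lt_or_eq with hlt | rfl
  · exact (ht j j' hj hj' hlt hcons).mem_nonDegenerate
  · rintro ⟨m, hm, -⟩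
    omega

lemma nvmap_bead_apply_eq {S : SSet} {t : Necklace N' J' ⟶ S} (ht : TotallyNondeg t)
    (h0' : (0 : Fin (N' + 1)) ∈ J') (hN' : Fin.last N' ∈ J')
    {f g : Necklace N J ⟶ Necklace N' J'} (hf : LevelSurj f) (hg : LevelSurj g)
    (hfg : f ≫ t = g ≫ t) {a a' : Fin (N + 1)} (ha : a ∈ J) (ha' : a' ∈ J) (hle : a ≤ a')
    (hcons : ∀ s ∈ J, ¬ (a < s ∧ s < a')) (hfga : nvmap f a = nvmap g a)
    (k : Fin (a'.val - a.val + 1)) :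
    nvmap f ((bead J a a' hle hcons).1 k) = nvmap g ((bead J a a' hle hcons).1 k) := by
  set x := bead J a a' hle hcons
  have hx0 : x.1 0 = a := bead_apply_zero hle hcons
  -- `t (h x)` is the degeneracy `spanMap (h x)` of the nondegenerate simplex
  -- `t (spanBead (h x))`, so Eilenberg–Zilber identifies the degeneracies for `h = f, g`.
  have decomp (h : Necklace N J ⟶ Necklace N' J') :
      S.map (spanMap (h.app _ x)).op (t.app _ (spanBead (h.app _ x))) = t.app _ (h.app _ x) := by
    rw [← NatTrans.naturality_apply, map_spanMap_spanBead]
  have nondeg {h : Necklace N J ⟶ Necklace N' J'} (hh : LevelSurj h) :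
      t.app _ (spanBead (h.app _ x)) ∈ S.nonDegenerate _ :=
    ht.app_bead_mem_nonDegenerate
      (by rw [app_apply, bead_apply_zero]; exact nvmap_mem hh h0' hN' ha)
      (by rw [app_apply, bead_apply_last]; exact nvmap_mem hh h0' hN' ha') _ _
  have htfg : t.app _ (f.app _ x) = t.app _ (g.app _ x) := congrArg (fun φ => φ.app _ x) hfg
  have := epi_spanMap_app_bead hf hle hcons
  have := epi_spanMap_app_bead hg hle hcons
  have key := apply_val_eq_of_map_eq _ _ (nondeg hf) (nondeg hg)
    ((decomp f).trans (htfg.trans (decomp g).symm)) k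
  simp only [spanMap_apply_val, app_apply, hx0] at key
  have hfk := monotone_nvmap f (x.1.monotone (Fin.zero_le k))
  have hgk := monotone_nvmap g (x.1.monotone (Fin.zero_le k))
  rw [hx0, Fin.le_def] at hfk hgk
  exact Fin.ext (by rw [hfga] at key hfk; omega)

end NecklaceMaps

theorem stmt13_general {S : SSet} (N : ℕ) (J : Finset (Fin (N + 1)))
    (h0 : (0 : Fin (N + 1)) ∈ J) (hN : Fin.last N ∈ J)
    (N' : ℕ) (J' : Finset (Fin (N' + 1)))
    (h0' : (0 : Fin (N' + 1)) ∈ J') (hN' : Fin.last N' ∈ J')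
    (t : Necklace N' J' ⟶ S) (u : Necklace N J ⟶ S) (ht : TotallyNondeg t)
    (f g : Necklace N J ⟶ Necklace N' J')
    (hfs : LevelSurj f) (hgs : LevelSurj g)
    (hft : f ≫ t = u) (hgt : g ≫ t = u) : f = g := by
  refine hom_ext_of_nvmap_eq (funext fun v => ?_)
  induction v using WellFoundedLT.induction with
  | _ v ih =>
    rcases (Fin.zero_le v).eq_or_lt with rfl | hv
    · rw [nvmap_zero hfs, nvmap_zero hgs]
    obtain ⟨a, ha, a', ha', hav, hva', hcons⟩ := exists_consecutive_joints h0 hN hv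
    obtain ⟨k, hk⟩ := exists_bead_apply_eq (hav.le.trans hva') hcons hav.le hva'
    rw [← hk]
    exact nvmap_bead_apply_eq ht h0' hN' hfs hgs (hft.trans hgt.symm) ha ha' _ hcons
      (ih a hav) k

theorem stmt13 {S : SSet} (N : ℕ) (J : Finset (Fin (N + 1)))
    (h0 : (0 : Fin (N + 1)) ∈ J) (hN : Fin.last N ∈ J)
    (N' : ℕ) (J' : Finset (Fin (N' + 1)))
    (h0' : (0 : Fin (N' + 1)) ∈ J') (hN' : Fin.last N' ∈ J')
    (t : Necklace N' J' ⟶ S) (u : Necklace N J ⟶ S) (ht : TotallyNondeg t)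
    (f g : Necklace N J ⟶ Necklace N' J')
    (hfs : LevelSurj f) (hgs : LevelSurj g)
    (hf0 : f.app _ (vtx J 0) = vtx J' 0)
    (hfN : f.app _ (vtx J (Fin.last N)) = vtx J' (Fin.last N'))
    (hg0 : g.app _ (vtx J 0) = vtx J' 0)
    (hgN : g.app _ (vtx J (Fin.last N)) = vtx J' (Fin.last N'))
    (hft : f ≫ t = u) (hgt : g ≫ t = u) : f = g :=
  stmt13_general N J h0 hN N' J' h0' hN' t u ht f g hfs hgs hft hgt

end Paper
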